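/- Let k, t be integers with 1 ≤ t ≤ k, and let S = {π1, …, πn} (n ≥ 2) be a (k; k−t)-SCID in a finite-dimensional vector space V over a field, i.e. a set of n distinct k-dimensional subspaces pairwise intersecting in subspaces of dimension k−t. Then δ(S) = (k, t, t, …, t) (that is, δ_j = t for all 2 ≤ j ≤ n) if and only if S is a (k−t)-sunflower of maximal dimension, i.e. there is a (k−t)-dimensional subspace V' such that π_i ∩ π_j = V' for all i ≠ j and dim⟨π1, …, πn⟩ = (k−t) + n·t. -/

import Mathlib

open Module

variable {F : Type*} [Field F] {V : Type*} [AddCommGroup V] [Module F V]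
  [FiniteDimensional F V]

/-- The subspace `⟨π_1, …, π_j⟩` (1-based), i.e. the span of the `π i` with `(i : ℕ) < j`. -/
def pspan {n : ℕ} (π : Fin n → Submodule F V) (j : ℕ) : Submodule F V :=
  ⨆ i : Fin n, ⨆ _ : (i : ℕ) < j, π i

/-- The 1-based difference sequence `δ_j = dim⟨π_1,…,π_j⟩ - dim⟨π_1,…,π_{j-1}⟩`. -/
noncomputable def delta {n : ℕ} (π : Fin n → Submodule F V) (j : ℕ) : ℕ :=
  finrank F ↥(pspan π j) - finrank F ↥(pspan π (j - 1))

/-- A `(k; ℓ_1, …, ℓ_v)`-SPID, where `L` is the set of prescribed intersection dimensions: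
a family of pairwise distinct `k`-dimensional subspaces, any two distinct members meeting
in a dimension belonging to `L`, and every value of `L` being attained. -/
def IsSPID {n : ℕ} (k : ℕ) (L : Set ℕ) (π : Fin n → Submodule F V) : Prop :=
  Function.Injective π ∧
  (∀ i, finrank F ↥(π i) = k) ∧
  (∀ i j, i ≠ j → finrank F ↥(π i ⊓ π j) ∈ L) ∧
  ∀ ℓ ∈ L, ∃ i j, i ≠ j ∧ finrank F ↥(π i ⊓ π j) = ℓ

/-- An `ℓ`-junta: all members pass through a common `ℓ`-dimensional subspace. -/
def IsJunta {n : ℕ} (ℓ : ℕ) (π : Fin n → Submodule F V) : Prop :=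
  ∃ C : Submodule F V, finrank F ↥C = ℓ ∧ ∀ i, C ≤ π i

/-- `S` contains an `ℓ`-sunflower of maximal dimension with `p` petals (all petals being
`k`-dimensional): `p` members of `S` pairwise meeting exactly in a common `ℓ`-dimensional
center and spanning a subspace of dimension `ℓ + p(k - ℓ)`. -/
def HasMaxSunflower (k ℓ p : ℕ) (S : Set (Submodule F V)) : Prop :=
  ∃ A : Finset (Submodule F V), ↑A ⊆ S ∧ A.card = p ∧
    ∃ C : Submodule F V, finrank F ↥C = ℓ ∧
      (∀ W ∈ A, ∀ W' ∈ A, W ≠ W' → W ⊓ W' = C) ∧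
      finrank F ↥(A.sup id) = ℓ + p * (k - ℓ)

/-! Write `D j = dim ⟨π_1, …, π_j⟩`. By Grassmann's formula `D (j + 1) = D j + k - dim (π_{j+1} ∩
⟨π_1, …, π_j⟩)`, and that intersection contains `π_1 ∩ π_{j+1}`, of dimension `k - t`; hence
`D (j + 1) ≤ D j + t`, so `D n ≤ k + (n - 1) t` with equality exactly when every `δ_j` equals `t`.
This settles the dimension condition in both directions. If every step is maximal,
`π_{j+1} ∩ ⟨π_1, …, π_j⟩` has dimension `k - t` and therefore equals `π_i ∩ π_{j+1}` for every
`i ≤ j`; in particular, for `j ≥ 3`, `π_i ∩ π_j` lies in both `π_1` and `π_2`, hence equals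
`π_1 ∩ π_2`, which has the same dimension. -/

theorem Nat.forall_eq_add_iff_eq_add_mul {E : ℕ → ℕ} {t m : ℕ}
    (hle : ∀ i < m, E (i + 1) ≤ E i + t) :
    (∀ i < m, E (i + 1) = E i + t) ↔ E m = E 0 + m * t := by
  have hchain : ∀ i d, i + d ≤ m → E (i + d) ≤ E i + d * t := by
    intro i d
    induction d with
    | zero => simp
    | succ d ih =>
      intro hd
      have := hle (i + d) (by omega)
      rw [← add_assoc, add_one_mul]
      omega
  constructor
  · intro hstep
    suffices ∀ i ≤ m, E i = E 0 + i * t from this m le_rfl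
    intro i
    induction i with
    | zero => simp
    | succ i ih =>
      intro hi
      rw [hstep i hi, ih (by omega), add_one_mul, add_assoc]
  · intro hm i hi
    obtain ⟨d, rfl⟩ := Nat.exists_eq_add_of_lt hi
    have hfirst := hchain 0 i (by omega)
    have hlast := hchain (i + 1) d (by omega)
    rw [zero_add] at hfirst
    rw [show i + 1 + d = i + d + 1 by omega] at hlast
    have := hle i (by omega)
    rw [show (i + d + 1) * t = i * t + d * t + t by ring] at hm
    omega

section pspan

omit [FiniteDimensional F V]

variable {n : ℕ} (π : Fin n → Submodule F V)

theorem pspan_zero : pspan π 0 = ⊥ := by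
  simp [pspan]

theorem le_pspan {j : ℕ} (i : Fin n) (h : (i : ℕ) < j) : π i ≤ pspan π j :=
  le_iSup₂_of_le i h le_rfl

theorem pspan_mono {j j' : ℕ} (h : j ≤ j') : pspan π j ≤ pspan π j' :=
  iSup₂_le fun i hi => le_pspan π i (hi.trans_le h)

theorem pspan_succ (j : Fin n) : pspan π (j + 1) = pspan π j ⊔ π j := by
  refine le_antisymm (iSup₂_le fun i hi => ?_)
    (sup_le (pspan_mono π j.val.le_succ) (le_pspan π j j.val.lt_succ_self))
  rcases Nat.lt_succ_iff_lt_or_eq.mp hi with h | h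
  · exact le_sup_of_le_left (le_pspan π i h)
  · rw [Fin.ext h]
    exact le_sup_right

theorem pspan_one (hn : 0 < n) : pspan π 1 = π ⟨0, hn⟩ := by
  have := pspan_succ π ⟨0, hn⟩
  rw [pspan_zero, bot_sup_eq] at this
  exact this

theorem pspan_self : pspan π n = ⨆ i, π i :=
  le_antisymm (iSup₂_le fun i _ => le_iSup π i) (iSup_le fun i => le_pspan π i i.isLt)

end pspan

theorem forall_delta_eq_iff {n : ℕ} (π : Fin n → Submodule F V) (t : ℕ) :
    (∀ j, 2 ≤ j → j ≤ n → delta π j = t) ↔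
      ∀ i < n - 1, finrank F ↥(pspan π (i + 1 + 1)) = finrank F ↥(pspan π (i + 1)) + t := by
  refine ⟨fun h i hi => ?_, fun h j h2 hj => ?_⟩
  · have hδ : finrank F ↥(pspan π (i + 1 + 1)) - finrank F ↥(pspan π (i + 1)) = t :=
      h (i + 2) (by omega) (by omega)
    have : finrank F ↥(pspan π (i + 1)) ≤ finrank F ↥(pspan π (i + 1 + 1)) :=
      Submodule.finrank_mono (pspan_mono π (Nat.le_succ _))
    omega
  · obtain ⟨i, rfl⟩ := Nat.exists_eq_add_of_le' h2
    show finrank F ↥(pspan π (i + 1 + 1)) - finrank F ↥(pspan π (i + 1)) = t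
    rw [h i (by omega)]
    omega

section finrank

variable {n k t : ℕ} {π : Fin n → Submodule F V} (hdim : ∀ i, finrank F ↥(π i) = k)
  (hint : ∀ i j, i ≠ j → finrank F ↥(π i ⊓ π j) = k - t)
include hdim hint

theorem finrank_pspan_succ_le (j : Fin n) (hj : 0 < (j : ℕ)) :
    finrank F ↥(pspan π (j + 1)) ≤ finrank F ↥(pspan π j) + t := by
  have hfirst : finrank F ↥(π ⟨0, hj.trans j.isLt⟩ ⊓ π j) ≤ finrank F ↥(pspan π j ⊓ π j) :=
    Submodule.finrank_mono (inf_le_inf_right _ (le_pspan π _ hj))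
  have hgrow := Submodule.finrank_sup_add_finrank_inf_eq (pspan π j) (π j)
  rw [← pspan_succ, hdim] at hgrow
  rw [hint _ _ (Fin.ne_of_lt hj)] at hfirst
  omega

theorem inf_eq_pspan_inf_of_finrank_pspan_succ {i j : Fin n} (hij : i < j)
    (hstep : finrank F ↥(pspan π (j + 1)) = finrank F ↥(pspan π j) + t) :
    π i ⊓ π j = pspan π j ⊓ π j := by
  refine Submodule.eq_of_le_of_finrank_eq (inf_le_inf_right _ (le_pspan π i hij)) ?_
  have hgrow := Submodule.finrank_sup_add_finrank_inf_eq (pspan π j) (π j)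
  rw [← pspan_succ, hdim] at hgrow
  rw [hint _ _ hij.ne]
  omega

end finrank

theorem exists_forall_inf_eq_of_inf_eq_of_lt {n ℓ : ℕ} {π : Fin n → Submodule F V} (hn : 2 ≤ n)
    (hint : ∀ i j, i ≠ j → finrank F ↥(π i ⊓ π j) = ℓ)
    (hlt : ∀ i i' j : Fin n, i < j → i' < j → π i ⊓ π j = π i' ⊓ π j) :
    ∃ C : Submodule F V, finrank F ↥C = ℓ ∧ ∀ i j, i ≠ j → π i ⊓ π j = C := by
  let i₀ : Fin n := ⟨0, by omega⟩
  let i₁ : Fin n := ⟨1, by omega⟩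
  have hi₀ : (i₀ : ℕ) = 0 := rfl
  have hi₁ : (i₁ : ℕ) = 1 := rfl
  have h₀₁ : i₀ < i₁ := Fin.mk_lt_mk.mpr zero_lt_one
  have key : ∀ i j : Fin n, i < j → π i ⊓ π j = π i₀ ⊓ π i₁ := by
    intro i j hij
    rcases (show (j : ℕ) = 1 ∨ 1 < (j : ℕ) by omega) with hj | hj
    · rw [show j = i₁ from Fin.ext (by omega), show i = i₀ from Fin.ext (by omega)]
    · have h₀ := hlt i i₀ j hij (Fin.lt_def.mpr (by omega))
      have h₁ := hlt i i₁ j hij (Fin.lt_def.mpr (by omega))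
      refine Submodule.eq_of_le_of_finrank_eq (le_inf ?_ ?_) ?_
      · exact h₀ ▸ inf_le_left
      · exact h₁ ▸ inf_le_left
      · rw [hint _ _ hij.ne, hint _ _ h₀₁.ne]
  refine ⟨π i₀ ⊓ π i₁, hint _ _ h₀₁.ne, fun i j hij => ?_⟩
  rcases lt_or_gt_of_ne hij with h | h
  · exact key i j h
  · rw [inf_comm]
    exact key j i h

theorem statement2_general {n k t : ℕ} (htk : t ≤ k) (hn : 2 ≤ n)
    (π : Fin n → Submodule F V)
    (hS : IsSPID k {k - t} π) :
    (∀ j, 2 ≤ j → j ≤ n → delta π j = t) ↔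
      ∃ V' : Submodule F V, finrank F ↥V' = k - t ∧
        (∀ i j, i ≠ j → π i ⊓ π j = V') ∧
        finrank F ↥(⨆ i, π i) = (k - t) + n * t := by
  obtain ⟨-, hdim, hint, -⟩ := hS
  replace hint : ∀ i j, i ≠ j → finrank F ↥(π i ⊓ π j) = k - t := hint
  set E : ℕ → ℕ := fun i => finrank F ↥(pspan π (i + 1))
  have hE0 : E 0 = k := by
    show finrank F ↥(pspan π 1) = k
    rw [pspan_one π (by omega), hdim]
  have hElast : E (n - 1) = finrank F ↥(⨆ i, π i) := by
    show finrank F ↥(pspan π (n - 1 + 1)) = _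
    rw [Nat.sub_add_cancel (by omega), pspan_self]
  have hle : ∀ i < n - 1, E (i + 1) ≤ E i + t := fun i hi =>
    finrank_pspan_succ_le hdim hint ⟨i + 1, by omega⟩ i.succ_pos
  have hnt : n * t = (n - 1) * t + t := by
    rw [← Nat.succ_mul, Nat.succ_eq_add_one, Nat.sub_add_cancel (by omega)]
  have hsteps_iff := Nat.forall_eq_add_iff_eq_add_mul hle
  rw [hElast, hE0] at hsteps_iff
  rw [forall_delta_eq_iff]
  refine ⟨fun hsteps => ?_, fun ⟨_, _, _, hspan⟩ => hsteps_iff.mpr (by omega)⟩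
  have hcenter (i j : Fin n) (hij : i < j) : π i ⊓ π j = pspan π j ⊓ π j := by
    obtain ⟨j', hj'⟩ : ∃ j', (j : ℕ) = j' + 1 := ⟨j - 1, by omega⟩
    have hstep : finrank F ↥(pspan π (j' + 1 + 1)) = finrank F ↥(pspan π (j' + 1)) + t :=
      hsteps j' (by omega)
    rw [← hj'] at hstep
    exact inf_eq_pspan_inf_of_finrank_pspan_succ hdim hint hij hstep
  obtain ⟨C, hC, hpair⟩ := exists_forall_inf_eq_of_inf_eq_of_lt hn hint
    fun i i' j hi hi' => (hcenter i j hi).trans (hcenter i' j hi').symm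
  exact ⟨C, hC, hpair, by rw [hsteps_iff.mp hsteps]; omega⟩

/-- Remark 1.3: for a `(k; k-t)`-SCID, `δ(S) = (k, t, …, t)` iff `S` is a
`(k-t)`-sunflower of maximal dimension. -/
theorem statement2 {n k t : ℕ} (ht : 1 ≤ t) (htk : t ≤ k) (hn : 2 ≤ n)
    (π : Fin n → Submodule F V)
    (hS : IsSPID k {k - t} π) :
    (∀ j, 2 ≤ j → j ≤ n → delta π j = t) ↔
      ∃ V' : Submodule F V, finrank F ↥V' = k - t ∧
        (∀ i j, i ≠ j → π i ⊓ π j = V') ∧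
        finrank F ↥(⨆ i, π i) = (k - t) + n * t :=
  statement2_general htk hn π hS
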